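/- (Differential privacy of the distributed mechanism.) Let n ≥ 1, λ > 0, Δf > 0. Let l = (l₁, …, l_n) and l′ = (l′₁, …, l′_n) be two load vectors that agree in all coordinates except one coordinate i₀, with |l_{i₀} − l′_{i₀}| ≤ Δf. Let the mechanism output M(l) = ∑_{i=1}^n lᵢ + ∑_{i=1}^n (G₁ᵢ − G₂ᵢ), where the G₁ᵢ, G₂ᵢ are 2n mutually independent Gamma(shape 1/n, scale λ) random variables. Then for every measurable set S ⊆ ℝ, P[M(l) ∈ S] ≤ exp(Δf/λ) · P[M(l′) ∈ S]; that is, the mechanism is (Δf/λ, 0)-differentially private. -/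

import Mathlib

/-!
A sum of `n` independent `Γ(1/n, λ)` variables is exponential with mean `λ`, because Gamma densities
of a common rate convolve into a Gamma density (the Beta integral). The noise of the mechanism is
therefore a difference of two independent exponentials, i.e. Laplace. Translating an exponential law
by `c ≥ 0` multiplies its density by at most `e^{c/λ}`; translating the positive or the negative
part of the noise, according to the sign of `c`, shows that the Laplace law translated by `c` is at
most `e^{|c|/λ}` times itself. Changing one load changes the total load by at most `Δf`.
-/

open MeasureTheory ProbabilityTheory
open scoped ENNReal

open Real Set in
lemma Real.integral_beta {a b : ℝ} (ha : 0 < a) (hb : 0 < b) :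
    ∫ x in (0 : ℝ)..1, x ^ (a - 1) * (1 - x) ^ (b - 1) = Gamma a * Gamma b / Gamma (a + b) := by
  have h := Complex.Gamma_mul_Gamma_eq_betaIntegral (s := a) (t := b)
    (by simpa using ha) (by simpa using hb)
  have hβ : Complex.betaIntegral a b =
      ((∫ x in (0 : ℝ)..1, x ^ (a - 1) * (1 - x) ^ (b - 1) : ℝ) : ℂ) := by
    rw [Complex.betaIntegral, ← intervalIntegral.integral_ofReal]
    refine intervalIntegral.integral_congr fun x hx => ?_
    rw [uIcc_of_le zero_le_one] at hx
    push_cast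
    rw [Complex.ofReal_cpow hx.1, Complex.ofReal_cpow (sub_nonneg.2 hx.2)]
    push_cast
    ring_nf
  rw [hβ, ← Complex.ofReal_add, Complex.Gamma_ofReal, Complex.Gamma_ofReal, Complex.Gamma_ofReal,
    ← Complex.ofReal_mul, ← Complex.ofReal_mul, Complex.ofReal_inj] at h
  exact eq_div_of_mul_eq (Gamma_pos_of_pos (add_pos ha hb)).ne' (by rw [h, mul_comm])

open Real Set in
lemma Real.integral_beta_of_pos {a b z : ℝ} (ha : 0 < a) (hb : 0 < b) (hz : 0 < z) :
    ∫ x in (0 : ℝ)..z, x ^ (a - 1) * (z - x) ^ (b - 1) =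
      z ^ (a + b - 1) * (Gamma a * Gamma b / Gamma (a + b)) := by
  have hsub := intervalIntegral.smul_integral_comp_mul_left
    (fun x => x ^ (a - 1) * (z - x) ^ (b - 1)) z (a := 0) (b := 1)
  rw [mul_zero, mul_one] at hsub
  rw [← hsub, ← Real.integral_beta ha hb, ← intervalIntegral.integral_const_mul, smul_eq_mul,
    ← intervalIntegral.integral_const_mul]
  refine intervalIntegral.integral_congr fun t ht => ?_
  rw [uIcc_of_le zero_le_one] at ht
  have h1t : 0 ≤ 1 - t := sub_nonneg.2 ht.2
  rw [show z - z * t = z * (1 - t) by ring, mul_rpow hz.le ht.1, mul_rpow hz.le h1t,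
    show a + b - 1 = 1 + (a - 1) + (b - 1) by ring, rpow_add hz, rpow_add hz, rpow_one]
  ring

open Real in
lemma Real.intervalIntegrable_beta {a b z : ℝ} (ha : 0 < a) (hb : 0 < b) (hz : 0 < z) :
    IntervalIntegrable (fun x => x ^ (a - 1) * (z - x) ^ (b - 1)) volume 0 z := by
  -- A non-integrable function has integral `0`, but the Beta integral is positive.
  by_contra h
  have := Real.integral_beta_of_pos ha hb hz
  rw [intervalIntegral.integral_undef h] at this
  have : 0 < z ^ (a + b - 1) * (Gamma a * Gamma b / Gamma (a + b)) := by
    have := Gamma_pos_of_pos ha; have := Gamma_pos_of_pos hb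
    have := Gamma_pos_of_pos (add_pos ha hb); positivity
  linarith

namespace MeasureTheory.Measure

lemma map_add_const_withDensity {G : Type*} [AddGroup G] [MeasurableSpace G] [MeasurableAdd G]
    (μ : Measure G) [IsAddRightInvariant μ] (f : G → ℝ≥0∞) (c : G) :
    (μ.withDensity f).map (· + c) = μ.withDensity fun z => f (z - c) := by
  ext s hs
  rw [map_apply (measurable_add_const c) hs, withDensity_apply _ (measurable_add_const c hs),
    withDensity_apply _ hs, ← (measurePreserving_add_right μ c).setLIntegral_comp_preimage_emb
      (MeasurableEquiv.addRight c).measurableEmbedding (fun z => f (z - c))]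
  simp only [add_sub_cancel_right]

variable {G : Type*} [AddCommMonoid G] [MeasurableSpace G] [MeasurableAdd₂ G] {μ ν : Measure G}

lemma conv_mono_left {μ' : Measure G} [SFinite ν] (h : μ ≤ μ') : μ ∗ ν ≤ μ' ∗ ν :=
  map_mono (prod_mono h le_rfl) measurable_add

lemma conv_mono_right {ν' : Measure G} [SFinite ν'] (h : ν ≤ ν') : μ ∗ ν ≤ μ ∗ ν' :=
  map_mono (prod_mono le_rfl h) measurable_add

lemma map_add_const_conv_right [SFinite μ] [SFinite ν] (c : G) :
    (μ ∗ ν).map (· + c) = μ ∗ ν.map (· + c) := by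
  rw [← conv_dirac, ← conv_dirac, conv_assoc]

lemma map_add_const_conv_left [SFinite μ] [SFinite ν] (c : G) :
    (μ ∗ ν).map (· + c) = μ.map (· + c) ∗ ν := by
  rw [conv_comm μ, conv_comm _ ν, map_add_const_conv_right]

end MeasureTheory.Measure

namespace ProbabilityTheory

open Real Set Measure

lemma gammaPDF_mul_gammaPDF_neg_add {a b r : ℝ} (ha : 0 < a) (hr : 0 < r) (z y : ℝ) :
    gammaPDF a r y * gammaPDF b r (-y + z) =
      (Icc 0 z).indicator (fun y => ENNReal.ofReal (r ^ a / Gamma a * (r ^ b / Gamma b) *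
        exp (-(r * z)) * (y ^ (a - 1) * (z - y) ^ (b - 1)))) y := by
  by_cases hy : y ∈ Icc 0 z
  · rw [indicator_of_mem hy, gammaPDF_of_nonneg hy.1, gammaPDF_of_nonneg (by linarith [hy.2]),
      ← ENNReal.ofReal_mul (by have := Gamma_pos_of_pos ha; have := hy.1; positivity)]
    congr 1
    have hexp : exp (-(r * y)) * exp (-(r * (-y + z))) = exp (-(r * z)) := by
      rw [← exp_add]; ring_nf
    rw [← hexp, neg_add_eq_sub]
    ring
  · rw [indicator_of_notMem hy]
    rcases not_and_or.1 hy with hy | hy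
    · rw [gammaPDF_of_neg (not_le.1 hy), zero_mul]
    · rw [gammaPDF_of_neg (by linarith [not_le.1 hy] : -y + z < 0), mul_zero]

lemma gammaPDF_lconvolution_gammaPDF {a b r : ℝ} (ha : 0 < a) (hb : 0 < b) (hr : 0 < r)
    {z : ℝ} (hz : z ≠ 0) : (gammaPDF a r ⋆ₗ gammaPDF b r) z = gammaPDF (a + b) r z := by
  rw [lconvolution_def, lintegral_congr (gammaPDF_mul_gammaPDF_neg_add ha hr z),
    lintegral_indicator measurableSet_Icc]
  rcases hz.lt_or_gt with hz | hz
  · rw [Icc_eq_empty hz.not_ge, Measure.restrict_empty, lintegral_zero_measure, gammaPDF_of_neg hz]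
  set C := r ^ a / Gamma a * (r ^ b / Gamma b) * exp (-(r * z)) with hC
  have hint : IntegrableOn (fun y => C * (y ^ (a - 1) * (z - y) ^ (b - 1))) (Icc 0 z) :=
    ((intervalIntegrable_iff_integrableOn_Icc_of_le hz.le).1
      (Real.intervalIntegrable_beta ha hb hz)).const_mul C
  have hnonneg :
      0 ≤ᵐ[volume.restrict (Icc 0 z)] fun y => C * (y ^ (a - 1) * (z - y) ^ (b - 1)) := by
    refine (ae_restrict_iff' measurableSet_Icc).2 (ae_of_all _ fun y hy => ?_)
    have := hy.1; have : 0 ≤ z - y := sub_nonneg.2 hy.2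
    positivity
  rw [← ofReal_integral_eq_lintegral_ofReal hint hnonneg, integral_Icc_eq_integral_Ioc,
    ← intervalIntegral.integral_of_le hz.le, intervalIntegral.integral_const_mul,
    Real.integral_beta_of_pos ha hb hz, gammaPDF_of_nonneg hz.le, rpow_add hr, hC]
  congr 1
  have := (Gamma_pos_of_pos ha).ne'; have := (Gamma_pos_of_pos hb).ne'
  field_simp

lemma measurable_gammaPDF (a r : ℝ) : Measurable (gammaPDF a r) :=
  (measurable_gammaPDFReal a r).ennreal_ofReal

lemma gammaMeasure_conv_gammaMeasure {a b r : ℝ} (ha : 0 < a) (hb : 0 < b) (hr : 0 < r) :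
    gammaMeasure a r ∗ gammaMeasure b r = gammaMeasure (a + b) r := by
  rw [gammaMeasure, gammaMeasure, conv_withDensity_eq_lconvolution (measurable_gammaPDF a r)
    (measurable_gammaPDF b r)]
  refine withDensity_congr_ae ?_
  filter_upwards [compl_mem_ae_iff.2 (measure_singleton (μ := volume) (0 : ℝ))] with z hz
  exact gammaPDF_lconvolution_gammaPDF ha hb hr hz

lemma iIndepFun.map_finsetSum_eq_gammaMeasure {Ω ι : Type*} [MeasurableSpace Ω] {μ : Measure Ω}
    [IsFiniteMeasure μ] {f : ι → Ω → ℝ} (hmeas : ∀ i, Measurable (f i))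
    (hindep : iIndepFun f μ) {a : ι → ℝ} {r : ℝ} (ha : ∀ i, 0 < a i) (hr : 0 < r)
    (hf : ∀ i, μ.map (f i) = gammaMeasure (a i) r) {s : Finset ι} (hs : s.Nonempty) :
    μ.map (∑ i ∈ s, f i) = gammaMeasure (∑ i ∈ s, a i) r := by
  induction hs using Finset.Nonempty.cons_induction with
  | singleton i => simpa using hf i
  | cons i s hi hs ih =>
    rw [Finset.sum_cons, Finset.sum_cons, (hindep.indepFun_finsetSum_of_notMem hmeas hi).symm
      |>.map_add_eq_map_conv_map (hmeas i) (by fun_prop), hf i, ih,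
      gammaMeasure_conv_gammaMeasure (ha i) (Finset.sum_pos (fun j _ => ha j) hs) hr]

lemma exponentialPDF_sub_le {r c : ℝ} (hc : 0 ≤ c) (z : ℝ) :
    exponentialPDF r (z - c) ≤ ENNReal.ofReal (exp (r * c)) * exponentialPDF r z := by
  by_cases hzc : 0 ≤ z - c
  · rw [exponentialPDF_of_nonneg hzc, exponentialPDF_of_nonneg (by linarith),
      ← ENNReal.ofReal_mul (exp_nonneg _), mul_left_comm, ← exp_add,
      show r * c + -(r * z) = -(r * (z - c)) by ring]
  · rw [exponentialPDF_of_neg (not_le.1 hzc)]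
    exact zero_le

lemma expMeasure_map_add_const_le {r c : ℝ} (hc : 0 ≤ c) :
    (expMeasure r).map (· + c) ≤ ENNReal.ofReal (exp (r * c)) • expMeasure r := by
  have hexp : expMeasure r = volume.withDensity (exponentialPDF r) := rfl
  rw [hexp, map_add_const_withDensity,
    ← withDensity_smul (f := exponentialPDF r) _ (measurable_exponentialPDFReal r).ennreal_ofReal]
  exact withDensity_mono (ae_of_all _ (exponentialPDF_sub_le hc))

instance instSFiniteExpMeasure (r : ℝ) : SFinite (expMeasure r) := by
  unfold expMeasure gammaMeasure; infer_instance

/-- The Laplace distribution of rate `r`, as the law of the difference of two independent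
`Exp(r)` variables. -/
noncomputable def laplaceMeasure (r : ℝ) : Measure ℝ := expMeasure r ∗ (expMeasure r).map Neg.neg

lemma laplaceMeasure_map_add_const_le (r c : ℝ) :
    (laplaceMeasure r).map (· + c) ≤ ENNReal.ofReal (exp (r * |c|)) • laplaceMeasure r := by
  rcases le_total 0 c with hc | hc
  · rw [laplaceMeasure, map_add_const_conv_left, abs_of_nonneg hc, ← conv_smul_left]
    exact conv_mono_left (expMeasure_map_add_const_le hc)
  · have hneg : ((expMeasure r).map Neg.neg).map (· + c) =
        ((expMeasure r).map (· + -c)).map Neg.neg := by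
      rw [map_map (by fun_prop) (by fun_prop), map_map (by fun_prop) (by fun_prop)]
      congr 1
      funext x
      simp only [Function.comp_apply]
      ring
    rw [laplaceMeasure, map_add_const_conv_right, abs_of_nonpos hc, ← conv_smul_right, hneg,
      ← Measure.map_smul]
    exact conv_mono_right (map_mono (expMeasure_map_add_const_le (neg_nonneg.2 hc)) (by fun_prop))

lemma iIndepFun.indepFun_finsetSum_finsetSum {Ω ι : Type*} [MeasurableSpace Ω] {μ : Measure Ω}
    {f : ι → Ω → ℝ} (hmeas : ∀ i, Measurable (f i)) (hindep : iIndepFun f μ)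
    {s t : Finset ι} (hst : Disjoint s t) :
    IndepFun (∑ i ∈ s, f i) (∑ i ∈ t, f i) μ := by
  have hsum : ∀ u : Finset ι, Measurable fun v : u → ℝ => ∑ i, v i := fun u => by fun_prop
  convert (hindep.indepFun_finset s t hst hmeas).comp (hsum s) (hsum t) using 1 <;>
  · ext ω
    simp only [Finset.sum_apply, Function.comp_apply]
    exact (Finset.sum_coe_sort _ fun i => f i ω).symm

lemma IndepFun.map_sub_eq_laplaceMeasure {Ω : Type*} [MeasurableSpace Ω] {μ : Measure Ω}
    [IsFiniteMeasure μ] {X Y : Ω → ℝ} (hX : Measurable X) (hY : Measurable Y)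
    (hXY : IndepFun X Y μ) {r : ℝ} (hmX : μ.map X = expMeasure r) (hmY : μ.map Y = expMeasure r) :
    μ.map (X - Y) = laplaceMeasure r := by
  rw [sub_eq_add_neg, hXY.neg_right.map_add_eq_map_conv_map hX hY.neg, hmX, laplaceMeasure, ← hmY,
    map_map measurable_neg hY]
  rfl

lemma measure_const_add_mem_le_of_map_eq_laplaceMeasure {Ω : Type*} [MeasurableSpace Ω]
    {μ : Measure Ω} {N : Ω → ℝ} (hN : Measurable N) {r : ℝ} (hlaw : μ.map N = laplaceMeasure r)
    (a a' : ℝ) {S : Set ℝ} (hS : MeasurableSet S) :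
    μ {ω | a + N ω ∈ S} ≤ ENNReal.ofReal (exp (r * |a - a'|)) * μ {ω | a' + N ω ∈ S} := by
  have hS' : MeasurableSet ((a' + ·) ⁻¹' S) := measurable_const_add a' hS
  calc μ {ω | a + N ω ∈ S}
      = (laplaceMeasure r).map (· + (a - a')) ((a' + ·) ⁻¹' S) := by
        rw [map_apply (measurable_add_const _) hS', ← hlaw,
          map_apply hN (measurable_add_const _ hS')]
        congr 1
        ext ω
        simp only [mem_ofPred_eq, mem_preimage, show a' + (N ω + (a - a')) = a + N ω by ring]
    _ ≤ (ENNReal.ofReal (exp (r * |a - a'|)) • laplaceMeasure r) ((a' + ·) ⁻¹' S) :=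
        laplaceMeasure_map_add_const_le r (a - a') _
    _ = ENNReal.ofReal (exp (r * |a - a'|)) * μ {ω | a' + N ω ∈ S} := by
        rw [Measure.smul_apply, smul_eq_mul, ← hlaw, map_apply hN hS']
        rfl

end ProbabilityTheory

theorem distributed_mechanism_diff_private_general
    {Ω : Type*} [MeasurableSpace Ω] (μ : Measure Ω) [IsProbabilityMeasure μ]
    (n : ℕ) (hn : 1 ≤ n) (lam Δf : ℝ) (hlam : 0 < lam)
    (l l' : Fin n → ℝ) (i₀ : Fin n)
    (hagree : ∀ i, i ≠ i₀ → l i = l' i) (hsens : |l i₀ - l' i₀| ≤ Δf)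
    (G : (Fin n ⊕ Fin n) → Ω → ℝ) (hmeas : ∀ j, Measurable (G j))
    (hindep : iIndepFun G μ)
    (hG : ∀ j, Measure.map (G j) μ = gammaMeasure (1 / n) (1 / lam))
    (S : Set ℝ) (hS : MeasurableSet S) :
    μ {ω | ((∑ i, l i) + ∑ i : Fin n, (G (Sum.inl i) ω - G (Sum.inr i) ω)) ∈ S} ≤
      ENNReal.ofReal (Real.exp (Δf / lam)) *
        μ {ω | ((∑ i, l' i) + ∑ i : Fin n, (G (Sum.inl i) ω - G (Sum.inr i) ω)) ∈ S} := by
  have hr : 0 < 1 / lam := by positivity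
  have hn0 : (n : ℝ) ≠ 0 := Nat.cast_ne_zero.2 (by omega)
  have hhalf : ∀ g : Fin n → Fin n ⊕ Fin n, g.Injective →
      μ.map (∑ i, G (g i)) = expMeasure (1 / lam) := fun g hg => by
    rw [(hindep.precomp hg).map_finsetSum_eq_gammaMeasure (fun _ => hmeas _)
      (fun _ => by positivity) hr (fun _ => hG _) (Finset.univ_nonempty_iff.2 ⟨⟨0, hn⟩⟩)]
    simp [expMeasure, hn0]
  have hXY : IndepFun (∑ i, G (Sum.inl i)) (∑ i, G (Sum.inr i)) μ := by
    simpa using hindep.indepFun_finsetSum_finsetSum hmeas (Finset.disjoint_map_inl_map_inr _ _)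
  have hnoise : μ.map (fun ω => ∑ i, (G (Sum.inl i) ω - G (Sum.inr i) ω)) =
      laplaceMeasure (1 / lam) := by
    convert hXY.map_sub_eq_laplaceMeasure (by fun_prop) (by fun_prop)
      (hhalf _ Sum.inl_injective) (hhalf _ Sum.inr_injective) using 2
    ext ω
    simp [Finset.sum_sub_distrib]
  have hdiff : (∑ i, l i) - ∑ i, l' i = l i₀ - l' i₀ := by
    rw [← Finset.sum_sub_distrib, Finset.sum_eq_single i₀
      (fun i _ hi => by rw [hagree i hi, sub_self]) (by simp)]
  calc _ ≤ ENNReal.ofReal (Real.exp (1 / lam * |(∑ i, l i) - ∑ i, l' i|)) * _ :=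
        measure_const_add_mem_le_of_map_eq_laplaceMeasure (by fun_prop) hnoise _ _ hS
    _ ≤ _ := by
        gcongr
        rw [hdiff, one_div_mul_eq_div]
        gcongr

/-- Differential privacy of the distributed mechanism: for two load vectors `l`, `l'`
agreeing except in one coordinate `i₀` with `|l i₀ − l' i₀| ≤ Δf`, the mechanism
`M(l) = ∑ i, l i + ∑ i, (G (Sum.inl i) − G (Sum.inr i))` with `2n` mutually independent
Gamma(shape `1/n`, scale `λ`, i.e. rate `1/λ`) noise variables satisfies
`P[M(l) ∈ S] ≤ exp (Δf/λ) · P[M(l') ∈ S]` for every measurable `S`; that is, it is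
`(Δf/λ, 0)`-differentially private. -/
theorem distributed_mechanism_diff_private
    {Ω : Type*} [MeasurableSpace Ω] (μ : Measure Ω) [IsProbabilityMeasure μ]
    (n : ℕ) (hn : 1 ≤ n) (lam Δf : ℝ) (hlam : 0 < lam) (hΔf : 0 < Δf)
    (l l' : Fin n → ℝ) (i₀ : Fin n)
    (hagree : ∀ i, i ≠ i₀ → l i = l' i) (hsens : |l i₀ - l' i₀| ≤ Δf)
    (G : (Fin n ⊕ Fin n) → Ω → ℝ) (hmeas : ∀ j, Measurable (G j))
    (hindep : iIndepFun G μ)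
    (hG : ∀ j, Measure.map (G j) μ = gammaMeasure (1 / n) (1 / lam))
    (S : Set ℝ) (hS : MeasurableSet S) :
    μ {ω | ((∑ i, l i) + ∑ i : Fin n, (G (Sum.inl i) ω - G (Sum.inr i) ω)) ∈ S} ≤
      ENNReal.ofReal (Real.exp (Δf / lam)) *
        μ {ω | ((∑ i, l' i) + ∑ i : Fin n, (G (Sum.inl i) ω - G (Sum.inr i) ω)) ∈ S} :=
  distributed_mechanism_diff_private_general μ n hn lam Δf hlam l l' i₀ hagree hsens G hmeas hindep
    hG S hS
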